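/- For every natural number n ≥ 1 and every α ∈ ℝ, the complex integrals I_n(α) = ∫_ℝ x^n · exp(−x²/2 + i·α·x³) dx satisfy the recursion I_n(α) = (n−1)·I_{n−2}(α) + 3·i·α·I_{n+1}(α), where I_{−1} is interpreted as 0 (so for n = 1: I_1(α) = 3·i·α·I_2(α)). -/

import Mathlib

open MeasureTheory

/-- The auxiliary integrals `I_n(α) = ∫ xⁿ exp(-x²/2 + iαx³) dx`. -/
noncomputable def cubicIn (n : ℕ) (α : ℝ) : ℂ :=
  ∫ x : ℝ, (x : ℂ) ^ n * Complex.exp (-(x : ℂ) ^ 2 / 2 + Complex.I * α * (x : ℂ) ^ 3)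

/-!
Since the weight `w(x) = exp(-x²/2 + iαx³)` has `|w(x)| = exp(-x²/2)`, every `xᵏ w(x)` is
integrable, so the derivative of `xᵐ w(x)` integrates to `0` over `ℝ`; expanding
`(xᵐ w)' = m xᵐ⁻¹ w + xᵐ (-x + 3iαx²) w` gives `0 = m I_{m-1} - I_{m+1} + 3iα I_{m+2}`.
-/

namespace CubicIn

noncomputable def weight (α x : ℝ) : ℂ :=
  Complex.exp (-(x : ℂ) ^ 2 / 2 + Complex.I * α * (x : ℂ) ^ 3)

theorem norm_weight (α x : ℝ) : ‖weight α x‖ = Real.exp (-(1 / 2) * x ^ 2) := by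
  rw [weight, Complex.norm_exp]
  congr 1
  simp [← Complex.ofReal_pow, Complex.mul_re, div_eq_inv_mul]

theorem continuous_weight (α : ℝ) : Continuous (weight α) := by
  unfold weight
  fun_prop

theorem integrable_pow_mul_weight (k : ℕ) (α : ℝ) :
    Integrable fun x : ℝ => (x : ℂ) ^ k * weight α x := by
  have hgauss : Integrable fun x : ℝ => x ^ k * Real.exp (-(1 / 2) * x ^ 2) := by
    simpa only [Real.rpow_natCast] using
      integrable_rpow_mul_exp_neg_mul_sq (b := 1 / 2) (s := k) (by norm_num)
        (neg_one_lt_zero.trans_le k.cast_nonneg)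
  refine hgauss.norm.mono'
    ((Complex.continuous_ofReal.pow k).mul (continuous_weight α)).aestronglyMeasurable
    (ae_of_all _ fun x => ?_)
  simp [norm_weight]

theorem hasDerivAt_weight (α x : ℝ) :
    HasDerivAt (weight α) ((-(x : ℂ) + 3 * Complex.I * α * (x : ℂ) ^ 2) * weight α x) x := by
  have hphase : HasDerivAt (fun z : ℂ => -z ^ 2 / 2 + Complex.I * α * z ^ 3)
      (-(x : ℂ) + 3 * Complex.I * α * (x : ℂ) ^ 2) x :=
    (((hasDerivAt_pow 2 (x : ℂ)).neg.div_const 2).add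
      ((hasDerivAt_pow 3 (x : ℂ)).const_mul (Complex.I * α))).congr_deriv (by push_cast; ring)
  exact hphase.comp_ofReal.cexp.congr_deriv (mul_comm _ _)

theorem hasDerivAt_pow_mul_weight (m : ℕ) (α x : ℝ) :
    HasDerivAt (fun y : ℝ => (y : ℂ) ^ m * weight α y)
      (m * ((x : ℂ) ^ (m - 1) * weight α x) - (x : ℂ) ^ (m + 1) * weight α x
        + 3 * Complex.I * α * ((x : ℂ) ^ (m + 2) * weight α x)) x :=
  ((hasDerivAt_pow m (x : ℂ)).comp_ofReal.mul (hasDerivAt_weight α x)).congr_deriv (by ring)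

theorem cubicIn_succ (m : ℕ) (α : ℝ) :
    cubicIn (m + 1) α = m * cubicIn (m - 1) α + 3 * Complex.I * α * cubicIn (m + 2) α := by
  have hint := integrable_pow_mul_weight (α := α)
  have hlower : Integrable fun x : ℝ =>
      (m : ℂ) * ((x : ℂ) ^ (m - 1) * weight α x) - (x : ℂ) ^ (m + 1) * weight α x :=
    ((hint _).const_mul _).sub (hint _)
  have hzero := integral_eq_zero_of_hasDerivAt_of_integrable (hasDerivAt_pow_mul_weight m α)
    (hlower.add ((hint _).const_mul _)) (hint m)
  rw [integral_add hlower ((hint _).const_mul _), integral_sub ((hint _).const_mul _) (hint _),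
    integral_const_mul, integral_const_mul] at hzero
  unfold weight at hzero
  unfold cubicIn
  linear_combination -hzero

end CubicIn

open CubicIn in
/-- The integration-by-parts recursion `I_n = (n-1) I_{n-2} + 3iα I_{n+1}` for `n ≥ 1`
(for `n = 1` the first term has vanishing coefficient, encoding `I_{-1} = 0`). -/
theorem cubicIn_recursion (n : ℕ) (hn : 1 ≤ n) (α : ℝ) :
    cubicIn n α =
      ((n : ℂ) - 1) * cubicIn (n - 2) α + 3 * Complex.I * α * cubicIn (n + 1) α := by
  obtain ⟨m, rfl⟩ : ∃ m, n = m + 1 := ⟨n - 1, by omega⟩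
  rw [cubicIn_succ, show m + 1 - 2 = m - 1 by omega, Nat.cast_succ, add_sub_cancel_right]
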